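/- Let A be a skew PBW extension of R with constants c_{i,r} and c_{i,j}, filtered by total degree as above. Then the associated graded ring Gr(A) = ⊕_m F_m(A)/F_{m−1}(A) is isomorphic to the quasi-commutative skew PBW extension A^σ of R in variables z_1,…,z_n defined by the relations z_i r = c_{i,r} z_i and z_j z_i = c_{i,j} z_i z_j. -/

import Mathlib

open scoped BigOperators

/-- The ordered standard monomial `x₁^{α₁} ⋯ xₙ^{αₙ}`. -/
def monom {A : Type*} [Monoid A] {n : ℕ} (x : Fin n → A) (α : Fin n → ℕ) : A :=
  (List.ofFn fun i => x i ^ α i).prod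

/-- `A` is a free left `R`-module (via the embedding `φ`) with basis the standard monomials:
every element has a unique representation as a finite left `R`-linear combination of the
standard monomials. -/
def IsPBWBasis {R A : Type*} [Ring R] [Ring A] {n : ℕ} (φ : R →+* A) (x : Fin n → A) : Prop :=
  ∀ a : A, ∃! c : (Fin n → ℕ) →₀ R, a = c.sum fun α r => φ r * monom x α

/-- A skew PBW extension `A` of `R` (Definition 2.1), with the defining constants
`cR i r` (for `r ≠ 0`) and `cC i j` recorded as data. -/
structure SkewPBW (R A : Type*) [Ring R] [Ring A] (n : ℕ) where
  /-- the inclusion `R ⊆ A` -/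
  φ : R →+* A
  inj : Function.Injective φ
  /-- the variables `x₁, …, xₙ` -/
  x : Fin n → A
  /-- (ii): `A` is a free left `R`-module with basis the standard monomials -/
  basis : IsPBWBasis φ x
  cR : Fin n → R → R
  cR_ne : ∀ i (r : R), r ≠ 0 → cR i r ≠ 0
  /-- (iii): `xᵢ r − c_{i,r} xᵢ ∈ R` -/
  hR : ∀ i (r : R), r ≠ 0 → ∃ s : R, x i * φ r - φ (cR i r) * x i = φ s
  cC : Fin n → Fin n → R
  cC_ne : ∀ i j, cC i j ≠ 0
  /-- (iv): `xⱼ xᵢ − c_{i,j} xᵢ xⱼ ∈ R + Rx₁ + ⋯ + Rxₙ` -/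
  hC : ∀ i j, ∃ (r0 : R) (r : Fin n → R),
    x j * x i - φ (cC i j) * (x i * x j) = φ r0 + ∑ t, φ (r t) * x t

/-- The degree filtration of a skew PBW extension, as additive subgroups:
`F m` is the left `R`-span of the standard monomials of total degree `≤ m`. -/
def degFiltrationAdd {R A : Type*} [Ring R] [Ring A] {n : ℕ} (φ : R →+* A) (x : Fin n → A)
    (m : ℕ) : AddSubgroup A :=
  AddSubgroup.closure {a : A | ∃ (r : R) (α : Fin n → ℕ), (∑ i, α i) ≤ m ∧ a = φ r * monom x α}

/-- `ψ` exhibits the ring `G` as the associated graded ring `Gr(A) = ⊕ₘ F m / F (m-1)` of the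
filtration `F` of `A`: the map `ψ m : F m →+ G` sends an element to its degree-`m` symbol; its
kernel is `F (m-1)` (resp. `0` for `m = 0`), the symbols multiply via the multiplication of
representatives, `ψ 0 1 = 1`, and `G` is the (internal) direct sum of the images of the `ψ m`. -/
structure GrModel {A : Type*} [Ring A] (F : ℕ → AddSubgroup A)
    (hmul : ∀ {i j : ℕ} {a b : A}, a ∈ F i → b ∈ F j → a * b ∈ F (i + j))
    (hone : (1 : A) ∈ F 0) (G : Type*) [Ring G] where
  ψ : ∀ m : ℕ, F m →+ G
  ker_zero : ∀ a : F 0, ψ 0 a = 0 ↔ (a : A) = 0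
  ker_succ : ∀ (m : ℕ) (a : F (m + 1)), ψ (m + 1) a = 0 ↔ (a : A) ∈ F m
  mul_symbol : ∀ (i j : ℕ) (a : F i) (b : F j),
    ψ (i + j) ⟨(a : A) * b, hmul a.2 b.2⟩ = ψ i a * ψ j b
  one_symbol : ψ 0 ⟨1, hone⟩ = 1
  decomp : ∀ g : G, ∃ (N : ℕ) (a : ∀ m, F m), g = ∑ m ∈ Finset.range N, ψ m (a m)
  indep : ∀ (N : ℕ) (a : ∀ m, F m),
    ∑ m ∈ Finset.range N, ψ m (a m) = 0 → ∀ m < N, ψ m (a m) = 0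

/-- `A'` (with inclusion `φ'` and variables `z`) is a quasi-commutative skew PBW extension of
`R` with defining constants `cR`, `cC`: the standard monomials form a left `R`-basis and the
defining relations hold exactly, `zᵢ r = c_{i,r} zᵢ` and `zⱼ zᵢ = c_{i,j} zᵢ zⱼ`. -/
def IsQuasiCommSkewPBW {R A' : Type*} [Ring R] [Ring A'] {n : ℕ} (φ' : R →+* A')
    (z : Fin n → A') (cR : Fin n → R → R) (cC : Fin n → Fin n → R) : Prop :=
  Function.Injective φ' ∧ IsPBWBasis φ' z ∧
    (∀ i (r : R), r ≠ 0 → z i * φ' r = φ' (cR i r) * z i) ∧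
    (∀ i j, z j * z i = φ' (cC i j) * (z i * z j))

/-!
Write `σ(a) ∈ F m / F (m-1)` for the symbol of `a ∈ F m`. The standard monomials form a basis of
`A` compatible with the filtration, so the symbols `σ(r x^α)`, taken in degree `|α|`, form a basis
of `Gr(A)` and `∑ c_α z^α ↦ ∑ σ(c_α x^α)` is an additive bijection `A^σ → Gr(A)`. It is
multiplicative because `A^σ` satisfies the quasi-commutation rules exactly and `A` satisfies them
modulo lower filtration degree: rewriting `(r x^α)(s x^β)` and `(r z^α)(s z^β)` into standard form
by the same steps yields the same leading coefficient.
-/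

section

variable {R : Type*} [Ring R] {n : ℕ}

section Words

variable {B : Type*} [Monoid B] (y : Fin n → B)

def wordProd (l : List (Fin n)) : B :=
  (l.map y).prod

@[simp] lemma wordProd_nil : wordProd y [] = 1 := rfl

@[simp] lemma wordProd_cons (a : Fin n) (l : List (Fin n)) :
    wordProd y (a :: l) = y a * wordProd y l := by
  simp [wordProd]

lemma wordProd_append (l l' : List (Fin n)) :
    wordProd y (l ++ l') = wordProd y l * wordProd y l' := by
  simp [wordProd]

def canonicalWord (α : Fin n → ℕ) : List (Fin n) :=
  (List.finRange n).flatMap fun i => List.replicate (α i) i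

lemma count_canonicalWord (α : Fin n → ℕ) (i : Fin n) : (canonicalWord α).count i = α i := by
  simp [canonicalWord, List.count_flatMap, ← Fin.sum_univ_def, Function.comp_def,
    List.count_replicate]

lemma length_canonicalWord (α : Fin n → ℕ) : (canonicalWord α).length = ∑ i, α i := by
  simp [canonicalWord, List.length_flatMap, ← Fin.sum_univ_def]

lemma pairwise_canonicalWord (α : Fin n → ℕ) : (canonicalWord α).Pairwise (· ≤ ·) := by
  refine List.pairwise_flatMap.2 ⟨fun i _ => List.pairwise_replicate.2 (Or.inr le_rfl), ?_⟩
  refine (List.pairwise_lt_finRange n).imp fun hij a ha b hb => ?_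
  rw [List.eq_of_mem_replicate ha, List.eq_of_mem_replicate hb]
  exact hij.le

lemma wordProd_canonicalWord (α : Fin n → ℕ) : wordProd y (canonicalWord α) = monom y α := by
  simp [wordProd, canonicalWord, monom, List.ofFn_eq_map, List.flatMap_def, List.prod_flatten,
    Function.comp_def]

lemma wordProd_of_pairwise {l : List (Fin n)} (hl : l.Pairwise (· ≤ ·)) :
    wordProd y l = monom y fun i => l.count i := by
  have hperm : l.Perm (canonicalWord fun i => l.count i) :=
    List.perm_iff_count.2 fun i => (count_canonicalWord (fun i => l.count i) i).symm
  rw [← wordProd_canonicalWord, ← hperm.eq_of_pairwise' hl (pairwise_canonicalWord _)]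

lemma wordProd_insertionSort_canonicalWord_append (α β : Fin n → ℕ) :
    wordProd y ((canonicalWord α ++ canonicalWord β).insertionSort (· ≤ ·)) = monom y (α + β) := by
  rw [wordProd_of_pairwise y (List.pairwise_insertionSort _ _)]
  congr 1
  funext i
  rw [(List.perm_insertionSort _ _).count_eq, List.count_append, count_canonicalWord,
    count_canonicalWord, Pi.add_apply]

lemma monom_zero : monom y 0 = 1 := by
  simp [monom]

lemma monom_single (i : Fin n) : monom y (Pi.single i 1) = y i := by
  have hcount : (fun j => [i].count j) = Pi.single i 1 := by
    funext j
    rcases eq_or_ne j i with rfl | hji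
    · simp
    · simp [hji, Ne.symm hji]
  simpa [hcount] using (wordProd_of_pairwise y (List.pairwise_singleton _ i)).symm

end Words

section Filtration

variable {B : Type*} [Ring B]

def filtrationLT (F : ℕ → AddSubgroup B) : ℕ → AddSubgroup B
  | 0 => ⊥
  | m + 1 => F m

variable {F : ℕ → AddSubgroup B}
  (hmul : ∀ {i j : ℕ} {a b : B}, a ∈ F i → b ∈ F j → a * b ∈ F (i + j))
include hmul

lemma mul_mem_filtrationLT_right {i j : ℕ} {a b : B} (ha : a ∈ F i)
    (hb : b ∈ filtrationLT F j) : a * b ∈ filtrationLT F (i + j) := by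
  cases j with
  | zero => simp_all [filtrationLT]
  | succ m => exact hmul ha hb

lemma mul_mem_filtrationLT_left {i j : ℕ} {a b : B} (ha : a ∈ filtrationLT F i)
    (hb : b ∈ F j) : a * b ∈ filtrationLT F (i + j) := by
  cases i with
  | zero => simp_all [filtrationLT]
  | succ m =>
    rw [Nat.add_right_comm]
    exact hmul ha hb

end Filtration

def ModLower {B : Type*} [AddGroup B] (L : ℕ → AddSubgroup B) (d : ℕ) (a b : B) : Prop :=
  a - b ∈ L d

namespace ModLower

variable {B : Type*} [AddGroup B] {L : ℕ → AddSubgroup B} {d : ℕ} {a b c : B}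

lemma of_eq (h : a = b) : ModLower L d a b := by
  simp [ModLower, h]

lemma trans (hab : ModLower L d a b) (hbc : ModLower L d b c) : ModLower L d a c := by
  simpa [ModLower] using add_mem hab hbc

instance : Trans (ModLower L d) (ModLower L d) (ModLower L d) := ⟨trans⟩

lemma bot_iff : ModLower (fun _ => ⊥) d a b ↔ a = b := by
  simp [ModLower, sub_eq_zero]

end ModLower

section Coefficients

variable (cR : Fin n → R → R) (cC : Fin n → Fin n → R)

open Classical in
/-- `c_{i,r}` is only prescribed for `r ≠ 0`; the rewriting rule `xᵢ r ↦ c_{i,r} xᵢ` needs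
`c_{i,0} = 0`. -/
noncomputable def scalarTwist (i : Fin n) (r : R) : R :=
  if r = 0 then 0 else cR i r

noncomputable def insertCoeff (i : Fin n) : List (Fin n) → R
  | [] => 1
  | a :: s => if i ≤ a then 1 else cC a i * scalarTwist cR a (insertCoeff i s)

noncomputable def sortCoeff : List (Fin n) → R
  | [] => 1
  | a :: l => scalarTwist cR a (sortCoeff l) * insertCoeff cR cC a (l.insertionSort (· ≤ ·))

noncomputable def monomialMulCoeff (α : Fin n → ℕ) (r : R) (β : Fin n → ℕ) (s : R) : R :=
  r * (canonicalWord α).foldr (scalarTwist cR) s *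
    sortCoeff cR cC (canonicalWord α ++ canonicalWord β)

end Coefficients

/-- `ψ` and `y` satisfy the relations of a quasi-commutative skew PBW extension with constants
`cR`, `cC` up to terms in `L`. A skew PBW extension does so with `L = F_{<d}` its lower degree
filtration, and `A^σ` with `L = 0`. -/
structure QuasiCommModLower {B : Type*} [Ring B] (F L : ℕ → AddSubgroup B) (ψ : R →+* B)
    (y : Fin n → B) (cR : Fin n → R → R) (cC : Fin n → Fin n → R) : Prop where
  scalar_mem : ∀ r, ψ r ∈ F 0
  var_mem : ∀ i, y i ∈ F 1
  mul_mem : ∀ {i j : ℕ} {a b : B}, a ∈ F i → b ∈ F j → a * b ∈ F (i + j)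
  mul_mem_lower : ∀ {i j : ℕ} {a b : B}, a ∈ F i → b ∈ L j → a * b ∈ L (i + j)
  lower_mul_mem : ∀ {i j : ℕ} {a b : B}, a ∈ L i → b ∈ F j → a * b ∈ L (i + j)
  var_mul_scalar : ∀ i r, ModLower L 1 (y i * ψ r) (ψ (scalarTwist cR i r) * y i)
  var_mul_var : ∀ i j, ModLower L 2 (y j * y i) (ψ (cC i j) * (y i * y j))

namespace QuasiCommModLower

variable {B : Type*} [Ring B] {F L : ℕ → AddSubgroup B} {ψ : R →+* B} {y : Fin n → B}
  {cR : Fin n → R → R} {cC : Fin n → Fin n → R} (Q : QuasiCommModLower F L ψ y cR cC)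
include Q

lemma modLower_scalar_mul (r : R) {d : ℕ} {a a' : B} (h : ModLower L d a a') :
    ModLower L d (ψ r * a) (ψ r * a') := by
  simpa [ModLower, mul_sub] using Q.mul_mem_lower (Q.scalar_mem r) h

lemma modLower_var_mul (i : Fin n) {d : ℕ} {a a' : B} (h : ModLower L d a a') :
    ModLower L (d + 1) (y i * a) (y i * a') := by
  simpa [ModLower, mul_sub, add_comm] using Q.mul_mem_lower (Q.var_mem i) h

lemma modLower_mul_right {i j k : ℕ} {a a' b : B} (h : ModLower L i a a') (hb : b ∈ F j)
    (hk : i + j = k := by omega) : ModLower L k (a * b) (a' * b) := by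
  subst hk
  simpa [ModLower, sub_mul] using Q.lower_mul_mem h hb

lemma wordProd_mem (l : List (Fin n)) : wordProd y l ∈ F l.length := by
  induction l with
  | nil => simpa using Q.scalar_mem 1
  | cons a l ih => simpa [add_comm] using Q.mul_mem (Q.var_mem a) ih

lemma monom_mem (α : Fin n → ℕ) : monom y α ∈ F (∑ i, α i) := by
  simpa [wordProd_canonicalWord, length_canonicalWord] using Q.wordProd_mem (canonicalWord α)

lemma var_mul_scalar_mul (i : Fin n) (t : R) {d : ℕ} {w : B} (hw : w ∈ F d) :
    ModLower L (d + 1) (y i * (ψ t * w)) (ψ (scalarTwist cR i t) * (y i * w)) := by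
  have h : ModLower L (d + 1) (y i * ψ t * w) (ψ (scalarTwist cR i t) * y i * w) :=
    Q.modLower_mul_right (Q.var_mul_scalar i t) hw
  simpa only [mul_assoc] using h

lemma wordProd_mul_scalar (l : List (Fin n)) (r : R) :
    ModLower L l.length (wordProd y l * ψ r) (ψ (l.foldr (scalarTwist cR) r) * wordProd y l) := by
  induction l with
  | nil => exact ModLower.of_eq (by simp)
  | cons a l ih =>
    rw [List.length_cons]
    calc wordProd y (a :: l) * ψ r = y a * (wordProd y l * ψ r) := by simp [mul_assoc]
      ModLower L (l.length + 1) _ _ := Q.modLower_var_mul a ih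
      ModLower L (l.length + 1) _ _ := Q.var_mul_scalar_mul a _ (Q.wordProd_mem l)
      _ = ψ ((a :: l).foldr (scalarTwist cR) r) * wordProd y (a :: l) := by simp

lemma var_mul_wordProd (i : Fin n) (s : List (Fin n)) :
    ModLower L (s.length + 1) (y i * wordProd y s)
      (ψ (insertCoeff cR cC i s) * wordProd y (s.orderedInsert (· ≤ ·) i)) := by
  induction s with
  | nil => exact ModLower.of_eq (by simp [insertCoeff])
  | cons a s ih =>
    by_cases hia : i ≤ a
    · exact ModLower.of_eq (by simp [insertCoeff, hia])
    have hs : wordProd y (s.orderedInsert (· ≤ ·) i) ∈ F (s.length + 1) := by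
      simpa [List.orderedInsert_length] using Q.wordProd_mem (s.orderedInsert (· ≤ ·) i)
    rw [List.length_cons]
    calc y i * wordProd y (a :: s) = y i * y a * wordProd y s := by simp [mul_assoc]
      ModLower L (s.length + 1 + 1) _ (ψ (cC a i) * (y a * y i) * wordProd y s) :=
        Q.modLower_mul_right (Q.var_mul_var a i) (Q.wordProd_mem s)
      _ = ψ (cC a i) * (y a * (y i * wordProd y s)) := by simp only [mul_assoc]
      ModLower L (s.length + 1 + 1) _ _ :=
        Q.modLower_scalar_mul _ (Q.modLower_var_mul a ih)
      ModLower L (s.length + 1 + 1) _ _ :=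
        Q.modLower_scalar_mul _ (Q.var_mul_scalar_mul a _ hs)
      _ = ψ (insertCoeff cR cC i (a :: s)) * wordProd y ((a :: s).orderedInsert (· ≤ ·) i) := by
        simp [insertCoeff, hia, mul_assoc]

lemma wordProd_modLower_insertionSort (l : List (Fin n)) :
    ModLower L l.length (wordProd y l)
      (ψ (sortCoeff cR cC l) * wordProd y (l.insertionSort (· ≤ ·))) := by
  induction l with
  | nil => exact ModLower.of_eq (by simp [sortCoeff])
  | cons a l ih =>
    have hsort : wordProd y (l.insertionSort (· ≤ ·)) ∈ F l.length := by
      simpa using Q.wordProd_mem (l.insertionSort (· ≤ ·))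
    have hins := Q.var_mul_wordProd a (l.insertionSort (· ≤ ·))
    rw [List.length_insertionSort] at hins
    rw [List.length_cons]
    calc wordProd y (a :: l) = y a * wordProd y l := wordProd_cons y a l
      ModLower L (l.length + 1) _ _ := Q.modLower_var_mul a ih
      ModLower L (l.length + 1) _ _ := Q.var_mul_scalar_mul a _ hsort
      ModLower L (l.length + 1) _ _ := Q.modLower_scalar_mul _ hins
      _ = ψ (sortCoeff cR cC (a :: l)) * wordProd y ((a :: l).insertionSort (· ≤ ·)) := by
        simp [sortCoeff, mul_assoc]

theorem monomial_mul (α : Fin n → ℕ) (r : R) (β : Fin n → ℕ) (s : R) :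
    ModLower L (∑ i, α i + ∑ i, β i) (ψ r * monom y α * (ψ s * monom y β))
      (ψ (monomialMulCoeff cR cC α r β s) * monom y (α + β)) := by
  have hα := Q.wordProd_mul_scalar (canonicalWord α) s
  rw [length_canonicalWord, wordProd_canonicalWord] at hα
  have hαβ := Q.wordProd_modLower_insertionSort (canonicalWord α ++ canonicalWord β)
  rw [List.length_append, length_canonicalWord, length_canonicalWord, wordProd_append,
    wordProd_canonicalWord, wordProd_canonicalWord,
    wordProd_insertionSort_canonicalWord_append] at hαβ
  calc ψ r * monom y α * (ψ s * monom y β) = ψ r * (monom y α * ψ s * monom y β) := by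
        simp only [mul_assoc]
    ModLower L (∑ i, α i + ∑ i, β i) _ _ :=
      Q.modLower_scalar_mul _ (Q.modLower_mul_right hα (Q.monom_mem β))
    _ = ψ (r * (canonicalWord α).foldr (scalarTwist cR) s) * (monom y α * monom y β) := by
      simp only [map_mul, mul_assoc]
    ModLower L (∑ i, α i + ∑ i, β i) _ _ := Q.modLower_scalar_mul _ hαβ
    _ = ψ (monomialMulCoeff cR cC α r β s) * monom y (α + β) := by
      simp only [monomialMulCoeff, map_mul, mul_assoc]

end QuasiCommModLower

lemma Finsupp.sum_range_filter_eq_self {ι M : Type*} [AddCommMonoid M] (f : ι → ℕ) (c : ι →₀ M)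
    {N : ℕ} (hN : ∀ i ∈ c.support, f i < N) :
    ∑ m ∈ Finset.range N, c.filter (fun i => f i = m) = c := by
  ext i
  simp only [Finsupp.finsetSum_apply, Finsupp.filter_apply, Finset.sum_ite_eq, Finset.mem_range]
  by_cases hi : i ∈ c.support
  · simp [hN i hi]
  · simp [Finsupp.notMem_support_iff.1 hi]

section Basis

variable {B : Type*} [Ring B] (ψ : R →+* B) (y : Fin n → B)

def monomialHom (α : Fin n → ℕ) : R →+ B :=
  (AddMonoidHom.mulRight (monom y α)).comp ψ.toAddMonoidHom

noncomputable def basisSum : ((Fin n → ℕ) →₀ R) →+ B :=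
  Finsupp.liftAddHom (monomialHom ψ y)

lemma basisSum_apply (c : (Fin n → ℕ) →₀ R) :
    basisSum ψ y c = c.sum fun α r => ψ r * monom y α :=
  Finsupp.liftAddHom_apply _ _

@[simp] lemma basisSum_single (α : Fin n → ℕ) (r : R) :
    basisSum ψ y (Finsupp.single α r) = ψ r * monom y α :=
  Finsupp.liftAddHom_apply_single _ _ _

lemma monomial_mem_degFiltrationAdd {r : R} {α : Fin n → ℕ} {m : ℕ} (h : ∑ i, α i ≤ m) :
    ψ r * monom y α ∈ degFiltrationAdd ψ y m :=
  AddSubgroup.subset_closure ⟨r, α, h, rfl⟩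

lemma map_mem_degFiltrationAdd (r : R) (m : ℕ) : ψ r ∈ degFiltrationAdd ψ y m := by
  simpa [monom_zero] using monomial_mem_degFiltrationAdd ψ y (r := r) (α := 0) (by simp)

lemma mul_var_mem_degFiltrationAdd (r : R) (i : Fin n) {m : ℕ} (hm : 1 ≤ m) :
    ψ r * y i ∈ degFiltrationAdd ψ y m := by
  simpa [monom_single] using
    monomial_mem_degFiltrationAdd ψ y (r := r) (α := Pi.single i 1) (by simpa using hm)

lemma basisSum_mem_degFiltrationAdd {c : (Fin n → ℕ) →₀ R} {m : ℕ}
    (hc : ∀ α ∈ c.support, ∑ i, α i ≤ m) : basisSum ψ y c ∈ degFiltrationAdd ψ y m := by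
  rw [basisSum_apply]
  exact AddSubgroup.sum_mem _ fun α hα => monomial_mem_degFiltrationAdd ψ y (hc α hα)

variable {ψ y}

lemma IsPBWBasis.bijective_basisSum (hb : IsPBWBasis ψ y) : Function.Bijective (basisSum ψ y) := by
  refine ⟨fun c d hcd => ?_, fun a => ?_⟩
  · refine (hb (basisSum ψ y c)).unique ?_ ?_
    · exact basisSum_apply ψ y c
    · rw [hcd, basisSum_apply]
  · obtain ⟨c, hc, -⟩ := hb a
    exact ⟨c, by rw [basisSum_apply, hc]⟩

noncomputable def IsPBWBasis.repr (hb : IsPBWBasis ψ y) : B ≃+ ((Fin n → ℕ) →₀ R) :=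
  (AddEquiv.ofBijective (basisSum ψ y) hb.bijective_basisSum).symm

variable (hb : IsPBWBasis ψ y)
include hb

@[simp] lemma IsPBWBasis.repr_basisSum (c : (Fin n → ℕ) →₀ R) : hb.repr (basisSum ψ y c) = c :=
  (AddEquiv.ofBijective _ hb.bijective_basisSum).symm_apply_apply c

lemma IsPBWBasis.repr_monomial (r : R) (α : Fin n → ℕ) :
    hb.repr (ψ r * monom y α) = Finsupp.single α r := by
  rw [← basisSum_single, hb.repr_basisSum]

lemma IsPBWBasis.degree_le_of_mem {m : ℕ} {a : B} (ha : a ∈ degFiltrationAdd ψ y m) :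
    ∀ α ∈ (hb.repr a).support, ∑ i, α i ≤ m := by
  induction ha using AddSubgroup.closure_induction with
  | mem a ha =>
    obtain ⟨r, β, hβ, rfl⟩ := ha
    intro α hα
    rw [hb.repr_monomial] at hα
    rwa [Finset.mem_singleton.1 (Finsupp.support_single_subset hα)]
  | zero => simp
  | add u v _ _ hu hv =>
    intro α hα
    rw [map_add] at hα
    exact (Finset.mem_union.1 (Finsupp.support_add hα)).elim (hu α) (hv α)
  | neg u _ hu => simpa using hu

lemma IsPBWBasis.degree_lt_of_mem_filtrationLT {m : ℕ} {a : B}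
    (ha : a ∈ filtrationLT (degFiltrationAdd ψ y) m) : ∀ α ∈ (hb.repr a).support, ∑ i, α i < m := by
  cases m with
  | zero => simp_all [filtrationLT]
  | succ m => exact fun α hα => Nat.lt_succ_of_le (hb.degree_le_of_mem ha α hα)

end Basis




theorem SkewPBW.quasiCommModLower {A : Type*} [Ring A] (E : SkewPBW R A n)
    (hmul : ∀ {i j : ℕ} {a b : A}, a ∈ degFiltrationAdd E.φ E.x i →
      b ∈ degFiltrationAdd E.φ E.x j → a * b ∈ degFiltrationAdd E.φ E.x (i + j)) :
    QuasiCommModLower (degFiltrationAdd E.φ E.x) (filtrationLT (degFiltrationAdd E.φ E.x))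
      E.φ E.x E.cR E.cC where
  scalar_mem r := map_mem_degFiltrationAdd E.φ E.x r 0
  var_mem i := by simpa using mul_var_mem_degFiltrationAdd E.φ E.x 1 i le_rfl
  mul_mem := hmul
  mul_mem_lower := mul_mem_filtrationLT_right (F := degFiltrationAdd E.φ E.x) hmul
  lower_mul_mem := mul_mem_filtrationLT_left (F := degFiltrationAdd E.φ E.x) hmul
  var_mul_scalar i r := by
    by_cases hr : r = 0
    · simp [ModLower, scalarTwist, hr]
    · obtain ⟨s, hs⟩ := E.hR i r hr
      rw [ModLower, scalarTwist, if_neg hr, hs]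
      exact map_mem_degFiltrationAdd E.φ E.x s 0
  var_mul_var i j := by
    obtain ⟨r0, r, h⟩ := E.hC i j
    rw [ModLower, h]
    exact add_mem (map_mem_degFiltrationAdd E.φ E.x r0 1) <|
      AddSubgroup.sum_mem _ fun t _ => mul_var_mem_degFiltrationAdd E.φ E.x (r t) t le_rfl

namespace IsQuasiCommSkewPBW

variable {A' : Type*} [Ring A'] {φ' : R →+* A'} {z : Fin n → A'} {cR : Fin n → R → R}
  {cC : Fin n → Fin n → R} (h : IsQuasiCommSkewPBW φ' z cR cC)
include h

lemma isPBWBasis : IsPBWBasis φ' z := h.2.1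

lemma quasiCommModLower : QuasiCommModLower (fun _ => ⊤) (fun _ => ⊥) φ' z cR cC where
  scalar_mem _ := AddSubgroup.mem_top _
  var_mem _ := AddSubgroup.mem_top _
  mul_mem _ _ := AddSubgroup.mem_top _
  mul_mem_lower _ hb := by simp_all
  lower_mul_mem ha _ := by simp_all
  var_mul_scalar i r := by
    by_cases hr : r = 0
    · simp [ModLower, scalarTwist, hr]
    · simp [ModLower, scalarTwist, hr, h.2.2.1 i r hr]
  var_mul_var i j := by simp [ModLower, h.2.2.2 i j]

lemma monomial_mul (α : Fin n → ℕ) (r : R) (β : Fin n → ℕ) (s : R) :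
    φ' r * monom z α * (φ' s * monom z β) = φ' (monomialMulCoeff cR cC α r β s) * monom z (α + β) :=
  ModLower.bot_iff.1 (h.quasiCommModLower.monomial_mul α r β s)

end IsQuasiCommSkewPBW

namespace GrModel

section Filtration

variable {A G : Type*} [Ring A] [Ring G] {F : ℕ → AddSubgroup A}
  {hmul : ∀ {i j : ℕ} {a b : A}, a ∈ F i → b ∈ F j → a * b ∈ F (i + j)} {hone : (1 : A) ∈ F 0}
  (M : GrModel F hmul hone G)

lemma ψ_eq_zero_iff {d : ℕ} {a : A} (ha : a ∈ F d) :
    M.ψ d ⟨a, ha⟩ = 0 ↔ a ∈ filtrationLT F d := by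
  cases d with
  | zero => simpa [filtrationLT] using M.ker_zero ⟨a, ha⟩
  | succ m => exact M.ker_succ m ⟨a, ha⟩

lemma ψ_eq_of_modLower {d : ℕ} {a b : A} (ha : a ∈ F d) (hb : b ∈ F d)
    (h : ModLower (filtrationLT F) d a b) : M.ψ d ⟨a, ha⟩ = M.ψ d ⟨b, hb⟩ :=
  sub_eq_zero.1 (by rw [← map_sub]; exact (M.ψ_eq_zero_iff (sub_mem ha hb)).2 h)

lemma ψ_congr_degree {d d' : ℕ} (h : d = d') {a : A} (ha : a ∈ F d) :
    M.ψ d ⟨a, ha⟩ = M.ψ d' ⟨a, h ▸ ha⟩ := by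
  subst h
  rfl

end Filtration

variable {A G : Type*} [Ring A] [Ring G] {φ : R →+* A} {x : Fin n → A}
  {hmul : ∀ {i j : ℕ} {a b : A}, a ∈ degFiltrationAdd φ x i → b ∈ degFiltrationAdd φ x j →
    a * b ∈ degFiltrationAdd φ x (i + j)}
  {hone : (1 : A) ∈ degFiltrationAdd φ x 0} (M : GrModel (degFiltrationAdd φ x) hmul hone G)

def symbol (α : Fin n → ℕ) : R →+ G :=
  (M.ψ (∑ i, α i)).comp <| (monomialHom φ x α).codRestrict _ fun _ =>
    monomial_mem_degFiltrationAdd φ x le_rfl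

lemma symbol_apply (α : Fin n → ℕ) (r : R) :
    M.symbol α r = M.ψ (∑ i, α i) ⟨φ r * monom x α, monomial_mem_degFiltrationAdd φ x le_rfl⟩ :=
  rfl

noncomputable def symbolSum : ((Fin n → ℕ) →₀ R) →+ G :=
  Finsupp.liftAddHom M.symbol

@[simp] lemma symbolSum_single (α : Fin n → ℕ) (r : R) :
    M.symbolSum (Finsupp.single α r) = M.symbol α r :=
  Finsupp.liftAddHom_apply_single _ _ _

lemma symbol_zero_one : M.symbol 0 1 = 1 := by
  rw [symbol_apply, M.ψ_congr_degree (d' := 0) (by simp)]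
  simpa [monom_zero] using M.one_symbol

theorem ψ_eq_symbolSum_filter (hb : IsPBWBasis φ x) {m : ℕ} {a : A}
    (ha : a ∈ degFiltrationAdd φ x m) :
    M.ψ m ⟨a, ha⟩ = M.symbolSum ((hb.repr a).filter fun α => ∑ i, α i = m) := by
  induction ha using AddSubgroup.closure_induction with
  | mem a ha =>
    obtain ⟨r, α, hα, rfl⟩ := ha
    rw [hb.repr_monomial]
    rcases hα.eq_or_lt with rfl | hlt
    · rw [Finsupp.filter_single_of_pos (fun β : Fin n → ℕ => ∑ i, β i = ∑ i, α i) rfl,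
        symbolSum_single, symbol_apply]
    · rw [Finsupp.filter_single_of_neg (fun β : Fin n → ℕ => ∑ i, β i = m) hlt.ne, map_zero]
      refine (M.ψ_eq_zero_iff _).2 ?_
      obtain ⟨k, rfl⟩ := Nat.exists_eq_add_of_lt hlt
      exact monomial_mem_degFiltrationAdd φ x (by omega)
  | zero =>
    rw [map_zero, Finsupp.filter_zero, map_zero]
    exact (M.ψ m).map_zero
  | add u v _ _ hu hv =>
    rw [map_add, Finsupp.filter_add, map_add, ← hu, ← hv, ← map_add]
    rfl
  | neg u _ hu =>
    rw [map_neg, Finsupp.filter_neg, map_neg, ← hu, ← map_neg]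
    rfl

theorem symbolSum_surjective (hb : IsPBWBasis φ x) : Function.Surjective M.symbolSum := by
  intro g
  obtain ⟨N, a, rfl⟩ := M.decomp g
  refine ⟨∑ m ∈ Finset.range N, (hb.repr (a m)).filter fun α => ∑ i, α i = m, ?_⟩
  rw [map_sum]
  exact Finset.sum_congr rfl fun m _ => (M.ψ_eq_symbolSum_filter hb (a m).2).symm

theorem symbolSum_injective (hb : IsPBWBasis φ x) : Function.Injective M.symbolSum := by
  -- The degree-`m` part of `c` is the symbol of an element of `F m`. These symbols vanish by
  -- independence of the graded pieces, pushing that element into `F (m-1)`: the part is zero.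
  refine (injective_iff_map_eq_zero _).2 fun c hc => ?_
  obtain ⟨N, hN⟩ : ∃ N, ∀ α ∈ c.support, ∑ i, α i < N :=
    ⟨c.support.sup (fun α => ∑ i, α i) + 1, fun α hα => Nat.lt_succ_of_le (Finset.le_sup hα)⟩
  set part : ℕ → (Fin n → ℕ) →₀ R := fun m => c.filter fun α => ∑ i, α i = m
  have hdeg m : ∀ α ∈ (part m).support, ∑ i, α i = m := fun α hα =>
    (Finset.mem_filter.1 hα).2
  have hmem m : basisSum φ x (part m) ∈ degFiltrationAdd φ x m :=
    basisSum_mem_degFiltrationAdd φ x fun α hα => (hdeg m α hα).le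
  have hψ m : M.ψ m ⟨_, hmem m⟩ = M.symbolSum (part m) := by
    rw [M.ψ_eq_symbolSum_filter hb, hb.repr_basisSum, (Finsupp.filter_eq_self_iff _ _).2]
    exact fun α hα => hdeg m α (Finsupp.mem_support_iff.2 hα)
  have hvanish := M.indep N (fun m => ⟨_, hmem m⟩) <| by
    simp only [hψ, ← map_sum, Finsupp.sum_range_filter_eq_self _ c hN, hc, part]
  rw [← Finsupp.sum_range_filter_eq_self _ c hN]
  refine Finset.sum_eq_zero fun m hm => ?_
  have hlt := hb.degree_lt_of_mem_filtrationLT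
    ((M.ψ_eq_zero_iff (hmem m)).1 (hvanish m (Finset.mem_range.1 hm)))
  rw [hb.repr_basisSum] at hlt
  exact Finsupp.support_eq_empty.1 <|
    Finset.eq_empty_of_forall_notMem fun α hα => (hlt α hα).ne (hdeg m α hα)

variable {A' : Type*} [Ring A'] {cR : Fin n → R → R} {cC : Fin n → Fin n → R}
  (Q : QuasiCommModLower (degFiltrationAdd φ x) (filtrationLT (degFiltrationAdd φ x)) φ x cR cC)
  {φ' : R →+* A'} {z : Fin n → A'} (hQ : IsQuasiCommSkewPBW φ' z cR cC)

include Q in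
lemma symbol_mul_symbol (α : Fin n → ℕ) (r : R) (β : Fin n → ℕ) (s : R) :
    M.symbol α r * M.symbol β s = M.symbol (α + β) (monomialMulCoeff cR cC α r β s) := by
  rw [symbol_apply, symbol_apply, ← M.mul_symbol, symbol_apply,
    M.ψ_congr_degree (d := ∑ i, (α + β) i) (d' := ∑ i, α i + ∑ i, β i)
      (by simp [Finset.sum_add_distrib])]
  exact M.ψ_eq_of_modLower _ _ (Q.monomial_mul α r β s)

lemma symbolSum_repr_one : M.symbolSum (hQ.isPBWBasis.repr 1) = 1 := by
  have h1 : (1 : A') = φ' 1 * monom z 0 := by rw [map_one, monom_zero, one_mul]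
  rw [h1, hQ.isPBWBasis.repr_monomial, symbolSum_single, symbol_zero_one]

include Q in
lemma symbolSum_repr_mul (a b : A') :
    M.symbolSum (hQ.isPBWBasis.repr (a * b)) =
      M.symbolSum (hQ.isPBWBasis.repr a) * M.symbolSum (hQ.isPBWBasis.repr b) := by
  obtain ⟨c, rfl⟩ := hQ.isPBWBasis.bijective_basisSum.2 a
  obtain ⟨d, rfl⟩ := hQ.isPBWBasis.bijective_basisSum.2 b
  simp only [IsPBWBasis.repr_basisSum]
  induction c using Finsupp.induction_linear with
  | zero => simp
  | add c c' hc hc' => rw [map_add, add_mul, map_add, map_add, hc, hc', map_add, add_mul]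
  | single α r =>
    induction d using Finsupp.induction_linear with
    | zero => simp
    | add d d' hd hd' => rw [map_add, mul_add, map_add, map_add, hd, hd', map_add, mul_add]
    | single β s =>
      rw [basisSum_single, basisSum_single, hQ.monomial_mul, hQ.isPBWBasis.repr_monomial,
        symbolSum_single, symbolSum_single, symbolSum_single, M.symbol_mul_symbol Q]

noncomputable def fromQuasiComm : A' →+* G where
  toFun a := M.symbolSum (hQ.isPBWBasis.repr a)
  map_zero' := by simp
  map_add' a b := by simp
  map_one' := M.symbolSum_repr_one hQ
  map_mul' := M.symbolSum_repr_mul Q hQ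

lemma bijective_fromQuasiComm (hb : IsPBWBasis φ x) : Function.Bijective (M.fromQuasiComm Q hQ) :=
  Function.Bijective.comp (g := M.symbolSum) ⟨M.symbolSum_injective hb, M.symbolSum_surjective hb⟩
    hQ.isPBWBasis.repr.bijective

end GrModel

end

/-- **Theorem 2.5.**  Let `A` be a skew PBW extension of `R` with defining constants
`c_{i,r}`, `c_{i,j}`, filtered by total degree.  Then the associated graded ring `Gr(A)`
is isomorphic to the quasi-commutative skew PBW extension `A^σ` of `R` in variables
`z₁,…,zₙ` defined by the relations `zᵢ r = c_{i,r} zᵢ` and `zⱼ zᵢ = c_{i,j} zᵢ zⱼ`. -/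
theorem skewPBW_gr_iso_quasiComm {R A : Type*} [Ring R] [Ring A] {n : ℕ}
    (E : SkewPBW R A n)
    (hmul : ∀ {i j : ℕ} {a b : A}, a ∈ degFiltrationAdd E.φ E.x i →
      b ∈ degFiltrationAdd E.φ E.x j → a * b ∈ degFiltrationAdd E.φ E.x (i + j))
    (hone : (1 : A) ∈ degFiltrationAdd E.φ E.x 0)
    -- `G` is (a model of) the associated graded ring of `A`
    {G : Type*} [Ring G] (_ : GrModel (degFiltrationAdd E.φ E.x) hmul hone G)
    -- `A'` is the quasi-commutative skew PBW extension `A^σ` with the same constants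
    {A' : Type*} [Ring A'] (φ' : R →+* A') (z : Fin n → A')
    (_ : IsQuasiCommSkewPBW φ' z E.cR E.cC) :
    Nonempty (A' ≃+* G) := by
  rename_i M _ hQ
  have Q := E.quasiCommModLower hmul
  exact ⟨RingEquiv.ofBijective (M.fromQuasiComm Q hQ) (M.bijective_fromQuasiComm Q hQ E.basis)⟩
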